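/- arXiv:2605.23289 — 3 statements merged into one kernel-verified Lean document; each statement's English description precedes it below -/
import Mathlib

section
/- Let d ≥ 1, T ∈ (0, ∞], let v : [0, T) × ℝ^d → ℝ^d be a continuously differentiable vector field which is divergence-free in space (trace of D_x v(t, x) equals 0 for all (t, x)), and suppose its flow Φ : [0, T) × ℝ^d → ℝ^d (Φ(0, x) = x, ∂_t Φ(t, x) = v(t, Φ(t, x))) exists, is continuously differentiable, and Φ(t, ·) is a bijection of ℝ^d for each t. If φ : [0, T) × ℝ^d → ℝ is continuously differentiable and satisfies ∂_t φ + v · ∇_x φ = 0, then t ↦ φ(t, ·) is a flow of rearrangements: for every t ∈ [0, T), the function φ(t, ·) is a rearrangement of φ(0, ·) with respect to Lebesgue measure on ℝ^d. -/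
/-!
Along a characteristic `s ↦ Φ(s, x)` the solution is constant, since
`d/ds φ(s, Φ(s, x)) = ∂ₛφ + v ⋅ ∇φ = 0`; hence `φ(t, ⋅) ∘ Φ(t, ⋅) = φ(0, ⋅)`. The Jacobian
`A(s) = DₓΦ(s, x)` solves the variational equation `A' = Dₓv(s, Φ(s, x)) A`, so by Jacobi's
formula `(det A)' = (div v) det A = 0` and `det A ≡ 1` (Liouville). By the change of variables
formula `Φ(t, ⋅)` preserves Lebesgue measure, and every superlevel set of `φ(0, ⋅)` is the
preimage under `Φ(t, ⋅)` of the corresponding superlevel set of `φ(t, ⋅)`.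
-/

open MeasureTheory
open scoped ENNReal

open Set Filter Function
open scoped Interval

theorem Convex.is_const_of_hasDerivWithinAt_zero {G : Type*} [NormedAddCommGroup G]
    [NormedSpace ℝ G] {f : ℝ → G} {I : Set ℝ} (hI : Convex ℝ I)
    (hf : ∀ s ∈ I, HasDerivWithinAt f 0 I s) {x y : ℝ} (hx : x ∈ I) (hy : y ∈ I) :
    f x = f y := by
  have := hI.norm_image_sub_le_of_norm_hasDerivWithin_le hf (fun _ _ => norm_zero.le) hx hy
  rw [zero_mul, norm_le_zero_iff, sub_eq_zero] at this
  exact this.symm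

section Slices

variable {E G : Type*} [NormedAddCommGroup E] [NormedSpace ℝ E] [NormedAddCommGroup G]
  [NormedSpace ℝ G] {f : ℝ → E → G} {I : Set ℝ} {s : ℝ}

theorem HasFDerivWithinAt.hasFDerivAt_slice {L : ℝ × E →L[ℝ] G} {x : E}
    (h : HasFDerivWithinAt (uncurry f) L (I ×ˢ univ) (s, x)) (hs : s ∈ I) :
    HasFDerivAt (f s) (L ∘L .inr ℝ ℝ E) x := by
  have := h.comp x (hasFDerivAt_prodMk_right s x).hasFDerivWithinAt
    (fun y (_ : y ∈ univ) => mk_mem_prod hs (mem_univ y))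
  rwa [hasFDerivWithinAt_univ] at this

theorem DifferentiableOn.hasFDerivAt_slice (hf : DifferentiableOn ℝ (uncurry f) (I ×ˢ univ))
    (hs : s ∈ I) (x : E) :
    HasFDerivAt (f s) (fderivWithin ℝ (uncurry f) (I ×ˢ univ) (s, x) ∘L .inr ℝ ℝ E) x :=
  (hf (s, x) ⟨hs, mem_univ x⟩).hasFDerivWithinAt.hasFDerivAt_slice hs

theorem DifferentiableOn.differentiable_slice
    (hf : DifferentiableOn ℝ (uncurry f) (I ×ˢ univ)) (hs : s ∈ I) : Differentiable ℝ (f s) :=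
  fun x => (hf.hasFDerivAt_slice hs x).differentiableAt

theorem ContDiffOn.continuousOn_fderiv_slice (hI : UniqueDiffOn ℝ I)
    (hf : ContDiffOn ℝ 1 (uncurry f) (I ×ˢ univ)) :
    ContinuousOn (uncurry fun r y => fderiv ℝ (f r) y) (I ×ˢ univ) := by
  refine ((hf.continuousOn_fderivWithin (hI.prod uniqueDiffOn_univ) le_rfl).clm_comp
    (continuousOn_const (c := .inr ℝ ℝ E))).congr fun p hp => ?_
  exact ((hf.differentiableOn one_ne_zero).hasFDerivAt_slice hp.1 p.2).fderiv

end Slices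

section Jacobi

-- The rows live in the sup-normed space `ι → ℝ` (a `Matrix` carries no norm instance), so that
-- `ContinuousMultilinearMap.hasFDerivAt` differentiates the determinant.
noncomputable def Matrix.detContinuousMultilinearMap (ι : Type*) [Fintype ι] [DecidableEq ι] :
    ContinuousMultilinearMap ℝ (fun _ : ι => ι → ℝ) ℝ :=
  { (Matrix.detRowAlternating : (ι → ℝ) [⋀^ι]→ₗ[ℝ] ℝ).toMultilinearMap with
    cont := (continuous_id (X := Matrix ι ι ℝ)).matrix_det }

variable {ι : Type*} [Fintype ι] [DecidableEq ι]

theorem Matrix.sum_det_updateRow_mul (N M : Matrix ι ι ℝ) :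
    ∑ i, (M.updateRow i ((N * M) i)).det = N.trace * M.det := by
  have hrow : ∀ i, (N * M) i = ∑ k, N i k • M k := fun i => by
    ext j; simp [Matrix.mul_apply, Finset.sum_apply]
  simp only [hrow, Matrix.det_updateRow_sum, smul_eq_mul, Matrix.trace, Matrix.diag,
    Finset.sum_mul]

theorem Matrix.linearDeriv_detContinuousMultilinearMap (N : Matrix ι ι ℝ) (M : ι → ι → ℝ) :
    (Matrix.detContinuousMultilinearMap ι).linearDeriv M (N * of M) = N.trace * (of M).det :=
  (ContinuousMultilinearMap.linearDeriv_apply _ _ _).trans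
    (Matrix.sum_det_updateRow_mul N (of M))

theorem ContinuousLinearMap.hasDerivWithinAt_det {E : Type*} [NormedAddCommGroup E]
    [NormedSpace ℝ E] [FiniteDimensional ℝ E] {A : ℝ → E →L[ℝ] E} {N : E →L[ℝ] E}
    {S : Set ℝ} {s : ℝ} (hA : HasDerivWithinAt A (N ∘L A s) S s) :
    HasDerivWithinAt (fun u => (A u).det) (LinearMap.trace ℝ E N * (A s).det) S s := by
  let b := Module.finBasis ℝ E
  let toMatrix :
      (E →L[ℝ] E) →L[ℝ] (Fin (Module.finrank ℝ E) → Fin (Module.finrank ℝ E) → ℝ) :=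
    LinearMap.toContinuousLinearMap
      ((LinearMap.toMatrix b b).toLinearMap ∘ₗ ContinuousLinearMap.coeLM ℝ)
  have hdet : ∀ L : E →L[ℝ] E, L.det = Matrix.detContinuousMultilinearMap _ (toMatrix L) :=
    fun L => (LinearMap.det_toMatrix b (L : E →ₗ[ℝ] E)).symm
  have hcomp : toMatrix (N ∘L A s) = LinearMap.toMatrix b b N * LinearMap.toMatrix b b (A s) :=
    LinearMap.toMatrix_comp b b b (N : E →ₗ[ℝ] E) (A s)
  have := ((Matrix.detContinuousMultilinearMap _).hasFDerivAt
    (toMatrix (A s))).comp_hasDerivWithinAt s (toMatrix.hasFDerivAt.comp_hasDerivWithinAt s hA)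
  rw [hcomp] at this
  rw [show (fun u => (A u).det) = _ from funext fun u => hdet (A u)]
  refine this.congr_deriv ?_
  rw [LinearMap.trace_eq_matrix_trace ℝ b, hdet]
  exact Matrix.linearDeriv_detContinuousMultilinearMap _ (toMatrix (A s))

end Jacobi

section MixedPartials

variable {E G : Type*} [NormedAddCommGroup E] [NormedSpace ℝ E] [ProperSpace E]
  [NormedAddCommGroup G] [NormedSpace ℝ G] {a b s : ℝ}

theorem hasFDerivAt_intervalIntegral_of_contDiffOn {W : ℝ → E → G} (hab : a < b)
    (hW : ContDiffOn ℝ 1 (uncurry W) (Icc a b ×ˢ univ)) (hs : s ∈ Icc a b) (x : E) :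
    HasFDerivAt (fun y => ∫ r in a..s, W r y) (∫ r in a..s, fderiv ℝ (W r) x) x := by
  have hsub : uIcc a s ⊆ Icc a b := by
    rw [uIcc_of_le hs.1]; exact Icc_subset_Icc_right hs.2
  have hsub' : Ι a s ⊆ Icc a b := uIoc_subset_uIcc.trans hsub
  have hW' := hW.continuousOn_fderiv_slice (uniqueDiffOn_Icc hab)
  obtain ⟨C, hC⟩ := (isCompact_Icc.prod (isCompact_closedBall x 1)).exists_bound_of_continuousOn
    (hW'.mono (prod_mono_right (subset_univ _)))
  refine hasFDerivAt_integral_of_dominated_of_fderiv_le''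
    (bound := fun _ => C) (Metric.ball_mem_nhds x one_pos)
    (Eventually.of_forall fun y =>
      ((hW.continuousOn.uncurry_right y (mem_univ y)).mono hsub').aestronglyMeasurable
        measurableSet_uIoc)
    (((hW.continuousOn.uncurry_right x (mem_univ x)).mono hsub).intervalIntegrable)
    (((hW'.uncurry_right x (mem_univ x)).mono hsub').aestronglyMeasurable measurableSet_uIoc)
    ((ae_restrict_mem measurableSet_uIoc).mono fun r hr y hy =>
      hC (r, y) ⟨hsub' hr, Metric.ball_subset_closedBall hy⟩)
    intervalIntegrable_const
    ((ae_restrict_mem measurableSet_uIoc).mono fun r hr y _ =>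
      ((hW.differentiableOn one_ne_zero).differentiable_slice (hsub' hr) y).hasFDerivAt)

-- `∂ₜ` and `Dₓ` commute although `F` is only differentiable in `x` at `a`: the integral form
-- `F u = F a + ∫ r in a..u, W r` carries the spatial regularity of `W` over to `F`.
theorem hasDerivWithinAt_fderiv_of_hasDerivWithinAt [CompleteSpace G] {F W : ℝ → E → G}
    (hab : a < b) (hW : ContDiffOn ℝ 1 (uncurry W) (Icc a b ×ˢ univ))
    (hFW : ∀ s ∈ Icc a b, ∀ x, HasDerivWithinAt (F · x) (W s x) (Icc a b) s)
    {x : E} (hFa : DifferentiableAt ℝ (F a) x) (hs : s ∈ Icc a b) :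
    HasDerivWithinAt (fun u => fderiv ℝ (F u) x) (fderiv ℝ (W s) x) (Icc a b) s := by
  have hFTC : ∀ u ∈ Icc a b, ∀ y, F u y = F a y + ∫ r in a..u, W r y := by
    intro u hu y
    have hsub : Icc a u ⊆ Icc a b := Icc_subset_Icc_right hu.2
    rw [intervalIntegral.integral_eq_sub_of_hasDeriv_right_of_le hu.1
      (fun r hr => ((hFW r (hsub hr) y).continuousWithinAt).mono hsub)
      (fun r hr => ((hFW r (hsub (Ioo_subset_Icc_self hr)) y).hasDerivAt
        (Icc_mem_nhds hr.1 (hr.2.trans_le hu.2))).hasDerivWithinAt)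
      (((hW.continuousOn.uncurry_right y (mem_univ y)).mono hsub).intervalIntegrable_of_Icc hu.1)]
    abel
  have hfderiv : ∀ u ∈ Icc a b,
      fderiv ℝ (F u) x = fderiv ℝ (F a) x + ∫ r in a..u, fderiv ℝ (W r) x := by
    intro u hu
    rw [show F u = fun y => F a y + ∫ r in a..u, W r y from funext (hFTC u hu)]
    exact (hFa.hasFDerivAt.add (hasFDerivAt_intervalIntegral_of_contDiffOn hab hW hu x)).fderiv
  have hW' := (hW.continuousOn_fderiv_slice (uniqueDiffOn_Icc hab)).uncurry_right x (mem_univ x)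
  have : Fact (s ∈ Icc a b) := ⟨hs⟩
  have hint := intervalIntegral.integral_hasDerivWithinAt_right (s := Icc a b) (t := Icc a b)
    ((hW'.mono (Icc_subset_Icc_right hs.2)).intervalIntegrable_of_Icc hs.1)
    (hW'.stronglyMeasurableAtFilter_nhdsWithin measurableSet_Icc s) (hW' s hs)
  exact (hint.const_add _).congr (fun u hu => hfderiv u hu) (hfderiv s hs)

end MixedPartials

section Flow

variable {E : Type*} [NormedAddCommGroup E] {v Φ : ℝ → E → E} {a b : ℝ}

theorem det_fderiv_flow_eq_one [NormedSpace ℝ E] [FiniteDimensional ℝ E] (hab : a < b)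
    (hv : ContDiffOn ℝ 1 (uncurry v) (Icc a b ×ˢ univ))
    (hdiv : ∀ s ∈ Icc a b, ∀ x, LinearMap.trace ℝ E (fderiv ℝ (v s) x) = 0)
    (hΦ : ContDiffOn ℝ 1 (uncurry Φ) (Icc a b ×ˢ univ)) (hΦa : ∀ x, Φ a x = x)
    (hΦv : ∀ s ∈ Icc a b, ∀ x, HasDerivWithinAt (Φ · x) (v s (Φ s x)) (Icc a b) s)
    (x : E) {t : ℝ} (ht : t ∈ Icc a b) : (fderiv ℝ (Φ t) x).det = 1 := by
  have hΦa' : Φ a = id := funext hΦa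
  have hW : ContDiffOn ℝ 1 (uncurry fun s y => v s (Φ s y)) (Icc a b ×ˢ univ) :=
    hv.comp (contDiffOn_fst.prodMk hΦ) fun p hp => ⟨hp.1, mem_univ _⟩
  have hvar : ∀ s ∈ Icc a b, HasDerivWithinAt (fun u => fderiv ℝ (Φ u) x)
      (fderiv ℝ (v s) (Φ s x) ∘L fderiv ℝ (Φ s) x) (Icc a b) s := fun s hs =>
    (hasDerivWithinAt_fderiv_of_hasDerivWithinAt hab hW hΦv
      (hΦa' ▸ differentiableAt_id) hs).congr_deriv
      (fderiv_comp x ((hv.differentiableOn one_ne_zero).differentiable_slice hs _)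
        ((hΦ.differentiableOn one_ne_zero).differentiable_slice hs x))
  have hdet : ∀ s ∈ Icc a b,
      HasDerivWithinAt (fun u => (fderiv ℝ (Φ u) x).det) 0 (Icc a b) s := fun s hs => by
    simpa [hdiv s hs] using ContinuousLinearMap.hasDerivWithinAt_det (hvar s hs)
  rw [(convex_Icc a b).is_const_of_hasDerivWithinAt_zero hdet ht (left_mem_Icc.2 hab.le), hΦa',
    fderiv_id]
  exact LinearMap.det_id

theorem apply_flow_eq_of_transport [InnerProductSpace ℝ E] [CompleteSpace E]
    {φ : ℝ → E → ℝ} (hab : a < b) (hφ : DifferentiableOn ℝ (uncurry φ) (Icc a b ×ˢ univ))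
    (hΦv : ∀ s ∈ Icc a b, ∀ x, HasDerivWithinAt (Φ · x) (v s (Φ s x)) (Icc a b) s)
    (hφv : ∀ s ∈ Icc a b, ∀ x,
      HasDerivWithinAt (φ · x) (-(inner ℝ (v s x) (gradient (φ s) x))) (Icc a b) s)
    (x : E) {t : ℝ} (ht : t ∈ Icc a b) : φ t (Φ t x) = φ a (Φ a x) := by
  refine (convex_Icc a b).is_const_of_hasDerivWithinAt_zero (f := fun u => φ u (Φ u x))
    (fun s hs => ?_) ht (left_mem_Icc.2 hab.le)
  obtain ⟨L, hL⟩ := hφ (s, Φ s x) ⟨hs, mem_univ _⟩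
  have hmaps : ∀ γ : ℝ → E, MapsTo (fun u => (u, γ u)) (Icc a b) (Icc a b ×ˢ univ) :=
    fun γ u hu => ⟨hu, mem_univ _⟩
  have hchain : HasDerivWithinAt (fun u => φ u (Φ u x)) (L (1, v s (Φ s x))) (Icc a b) s :=
    hL.comp_hasDerivWithinAt (f := fun u => (u, Φ u x)) s
      ((hasDerivWithinAt_id s _).prodMk (hΦv s hs x)) (hmaps _)
  have htime : L (1, 0) = -(inner ℝ (v s (Φ s x)) (gradient (φ s) (Φ s x))) :=
    (uniqueDiffOn_Icc hab s hs).eq_deriv _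
      (hL.comp_hasDerivWithinAt (f := fun u => (u, Φ s x)) s ((hasDerivWithinAt_id s _).prodMk
        (hasDerivWithinAt_const s _ (Φ s x))) (hmaps _)) (hφv s hs (Φ s x))
  have hspace : inner ℝ (v s (Φ s x)) (gradient (φ s) (Φ s x)) = L (0, v s (Φ s x)) := by
    rw [real_inner_comm, gradient, (hL.hasFDerivAt_slice hs).fderiv,
      InnerProductSpace.toDual_symm_apply]
    rfl
  have hsplit : ((1 : ℝ), v s (Φ s x)) = (1, 0) + (0, v s (Φ s x)) := by simp
  rwa [hsplit, map_add, htime, hspace, neg_add_cancel] at hchain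

end Flow

theorem measurePreserving_of_det_fderiv_eq_one {E : Type*} [NormedAddCommGroup E]
    [NormedSpace ℝ E] [FiniteDimensional ℝ E] [MeasurableSpace E] [BorelSpace E]
    (μ : Measure E) [μ.IsAddHaarMeasure] {f : E → E} (hf : Differentiable ℝ f)
    (hdet : ∀ x, (fderiv ℝ f x).det = 1) (hbij : Bijective f) : MeasurePreserving f μ μ := by
  refine ⟨hf.continuous.measurable, ?_⟩
  have := map_withDensity_abs_det_fderiv_eq_addHaar μ MeasurableSet.univ.nullMeasurableSet
    (fun x _ => (hf x).hasFDerivAt.hasFDerivWithinAt) hbij.injective.injOn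
  simpa [hdet, hbij.surjective.range_eq] using this

theorem MeasureTheory.MeasurePreserving.measure_preimage_eq_of_comp_eq {α β : Type*} [MeasurableSpace α]
    [MeasurableSpace β] {μ : Measure α} {f : α → α} (hf : MeasurePreserving f μ μ)
    {g h : α → β} (hg : Measurable g) (hgf : g ∘ f = h) {C : Set β} (hC : MeasurableSet C) :
    μ (g ⁻¹' C) = μ (h ⁻¹' C) := by
  rw [← hf.measure_preimage (hg hC).nullMeasurableSet, ← preimage_comp, hgf]

theorem transport_divFree_isFlowOfRearrangements_general
    (d : ℕ) (T : ℝ≥0∞)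
    (v : ℝ → EuclideanSpace ℝ (Fin d) → EuclideanSpace ℝ (Fin d))
    (hv : ContDiffOn ℝ 1 (fun p : ℝ × EuclideanSpace ℝ (Fin d) => v p.1 p.2)
      {p : ℝ × EuclideanSpace ℝ (Fin d) | 0 ≤ p.1 ∧ ENNReal.ofReal p.1 < T})
    (hdiv : ∀ (t : ℝ) (x : EuclideanSpace ℝ (Fin d)), 0 ≤ t → ENNReal.ofReal t < T →
      LinearMap.trace ℝ (EuclideanSpace ℝ (Fin d))
        (fderiv ℝ (v t) x : EuclideanSpace ℝ (Fin d) →ₗ[ℝ] EuclideanSpace ℝ (Fin d)) = 0)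
    (Φ : ℝ → EuclideanSpace ℝ (Fin d) → EuclideanSpace ℝ (Fin d))
    (hΦreg : ContDiffOn ℝ 1 (fun p : ℝ × EuclideanSpace ℝ (Fin d) => Φ p.1 p.2)
      {p : ℝ × EuclideanSpace ℝ (Fin d) | 0 ≤ p.1 ∧ ENNReal.ofReal p.1 < T})
    (hΦ0 : ∀ x, Φ 0 x = x)
    (hΦode : ∀ (t : ℝ) (x : EuclideanSpace ℝ (Fin d)), 0 ≤ t → ENNReal.ofReal t < T →
      HasDerivWithinAt (fun s => Φ s x) (v t (Φ t x))
        {s : ℝ | 0 ≤ s ∧ ENNReal.ofReal s < T} t)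
    (hΦbij : ∀ t : ℝ, 0 ≤ t → ENNReal.ofReal t < T → Function.Bijective (Φ t))
    (φ : ℝ → EuclideanSpace ℝ (Fin d) → ℝ)
    (hφ : ContDiffOn ℝ 1 (fun p : ℝ × EuclideanSpace ℝ (Fin d) => φ p.1 p.2)
      {p : ℝ × EuclideanSpace ℝ (Fin d) | 0 ≤ p.1 ∧ ENNReal.ofReal p.1 < T})
    (hpde : ∀ (t : ℝ) (x : EuclideanSpace ℝ (Fin d)), 0 ≤ t → ENNReal.ofReal t < T →
      HasDerivWithinAt (fun s => φ s x)
        (-(inner ℝ (v t x) (gradient (φ t) x) : ℝ))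
        {s : ℝ | 0 ≤ s ∧ ENNReal.ofReal s < T} t) :
    ∀ t : ℝ, 0 ≤ t → ENNReal.ofReal t < T → ∀ η : ℝ, 0 < η →
      volume {x | η ≤ φ t x} = volume {x | η ≤ φ 0 x} ∧
      volume {x | η ≤ -(φ t x)} = volume {x | η ≤ -(φ 0 x)} := by
  intro t ht0 htT η _
  rcases ht0.eq_or_lt with rfl | htpos
  · exact ⟨rfl, rfl⟩
  have hJ : Icc 0 t ⊆ {s : ℝ | 0 ≤ s ∧ ENNReal.ofReal s < T} := fun s hs =>
    ⟨hs.1, (ENNReal.ofReal_le_ofReal hs.2).trans_lt htT⟩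
  have hJS : Icc 0 t ×ˢ (univ : Set (EuclideanSpace ℝ (Fin d))) ⊆
      {p : ℝ × EuclideanSpace ℝ (Fin d) | 0 ≤ p.1 ∧ ENNReal.ofReal p.1 < T} :=
    fun p hp => hJ hp.1
  have ht : t ∈ Icc 0 t := right_mem_Icc.2 ht0
  have hΦv : ∀ s ∈ Icc 0 t, ∀ x, HasDerivWithinAt (Φ · x) (v s (Φ s x)) (Icc 0 t) s :=
    fun s hs x => (hΦode s x (hJ hs).1 (hJ hs).2).mono hJ
  have hφJ := (hφ.mono hJS).differentiableOn one_ne_zero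
  have hflow : ∀ x, φ t (Φ t x) = φ 0 x := fun x => by
    simpa only [hΦ0] using apply_flow_eq_of_transport htpos hφJ hΦv
      (fun s hs y => (hpde s y (hJ hs).1 (hJ hs).2).mono hJ) x ht
  have hpres : MeasurePreserving (Φ t) := measurePreserving_of_det_fderiv_eq_one volume
    (((hΦreg.mono hJS).differentiableOn one_ne_zero).differentiable_slice ht)
    (fun x => det_fderiv_flow_eq_one htpos (hv.mono hJS)
      (fun s hs y => hdiv s y (hJ hs).1 (hJ hs).2) (hΦreg.mono hJS) hΦ0 hΦv x ht)
    (hΦbij t ht0 htT)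
  have hφt : Measurable (φ t) := (hφJ.differentiable_slice ht).continuous.measurable
  exact ⟨hpres.measure_preimage_eq_of_comp_eq hφt (funext hflow) measurableSet_Ici,
    hpres.measure_preimage_eq_of_comp_eq hφt (funext hflow)
      (measurableSet_le measurable_const measurable_neg)⟩

/-- A `C¹` solution of the transport equation `∂ₜφ + v ⋅ ∇ₓφ = 0` on `[0, T) × ℝ^d`,
where `v` is a `C¹` divergence-free vector field whose flow exists, is `C¹` and is a
bijection at every time, is a flow of rearrangements: for every time `t ∈ [0, T)` and
every level `η > 0`, the superlevel sets `{φ(t,⋅) ≥ η}` and `{-φ(t,⋅) ≥ η}` have the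
same Lebesgue measure as those of the initial datum `φ(0,⋅)`. -/
theorem transport_divFree_isFlowOfRearrangements
    (d : ℕ) (hd : 1 ≤ d) (T : ℝ≥0∞) (hT : 0 < T)
    (v : ℝ → EuclideanSpace ℝ (Fin d) → EuclideanSpace ℝ (Fin d))
    (hv : ContDiffOn ℝ 1 (fun p : ℝ × EuclideanSpace ℝ (Fin d) => v p.1 p.2)
      {p : ℝ × EuclideanSpace ℝ (Fin d) | 0 ≤ p.1 ∧ ENNReal.ofReal p.1 < T})
    (hdiv : ∀ (t : ℝ) (x : EuclideanSpace ℝ (Fin d)), 0 ≤ t → ENNReal.ofReal t < T →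
      LinearMap.trace ℝ (EuclideanSpace ℝ (Fin d))
        (fderiv ℝ (v t) x : EuclideanSpace ℝ (Fin d) →ₗ[ℝ] EuclideanSpace ℝ (Fin d)) = 0)
    (Φ : ℝ → EuclideanSpace ℝ (Fin d) → EuclideanSpace ℝ (Fin d))
    (hΦreg : ContDiffOn ℝ 1 (fun p : ℝ × EuclideanSpace ℝ (Fin d) => Φ p.1 p.2)
      {p : ℝ × EuclideanSpace ℝ (Fin d) | 0 ≤ p.1 ∧ ENNReal.ofReal p.1 < T})
    (hΦ0 : ∀ x, Φ 0 x = x)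
    (hΦode : ∀ (t : ℝ) (x : EuclideanSpace ℝ (Fin d)), 0 ≤ t → ENNReal.ofReal t < T →
      HasDerivWithinAt (fun s => Φ s x) (v t (Φ t x))
        {s : ℝ | 0 ≤ s ∧ ENNReal.ofReal s < T} t)
    (hΦbij : ∀ t : ℝ, 0 ≤ t → ENNReal.ofReal t < T → Function.Bijective (Φ t))
    (φ : ℝ → EuclideanSpace ℝ (Fin d) → ℝ)
    (hφ : ContDiffOn ℝ 1 (fun p : ℝ × EuclideanSpace ℝ (Fin d) => φ p.1 p.2)
      {p : ℝ × EuclideanSpace ℝ (Fin d) | 0 ≤ p.1 ∧ ENNReal.ofReal p.1 < T})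
    (hpde : ∀ (t : ℝ) (x : EuclideanSpace ℝ (Fin d)), 0 ≤ t → ENNReal.ofReal t < T →
      HasDerivWithinAt (fun s => φ s x)
        (-(inner ℝ (v t x) (gradient (φ t) x) : ℝ))
        {s : ℝ | 0 ≤ s ∧ ENNReal.ofReal s < T} t) :
    ∀ t : ℝ, 0 ≤ t → ENNReal.ofReal t < T → ∀ η : ℝ, 0 < η →
      volume {x | η ≤ φ t x} = volume {x | η ≤ φ 0 x} ∧
      volume {x | η ≤ -(φ t x)} = volume {x | η ≤ -(φ 0 x)} :=
  transport_divFree_isFlowOfRearrangements_general d T v hv hdiv Φ hΦreg hΦ0 hΦode hΦbij φ hφ hpde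
end

section
/- Let T > 0, let N : [0, T] → [0, ∞) be continuous, and let R : [0, T] → (0, 1] be differentiable and satisfy the differential inequality R'(t) ≥ -N(t) · R(t) · (1 - log R(t)) for all t ∈ [0, T]. Then for every t ∈ [0, T], 1 - log R(t) ≤ (1 - log R(0)) · exp(∫_0^t N(τ) dτ); equivalently, R(t) ≥ exp(1 - (1 - log R(0)) · exp(∫_0^t N(τ) dτ)). In particular R remains bounded below by a strictly positive quantity depending only on R(0) and ∫_0^T N. -/
/-!
With `y = 1 - log R` the Osgood inequality becomes the linear differential inequality
`y' = -R'/R ≤ N y`, so by Grönwall's argument `y(t) · exp(-∫₀ᵗ N)` is nonincreasing.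
This is the bound on `1 - log R(t)`; exponentiating it gives the lower bound on `R(t)`.
-/

open Set Real

theorem ContinuousOn.hasDerivWithinAt_integral_Icc {N : ℝ → ℝ} {a b t : ℝ}
    (hN : ContinuousOn N (Icc a b)) (ht : t ∈ Icc a b) :
    HasDerivWithinAt (fun u => ∫ τ in a..u, N τ) (N t) (Icc a b) t := by
  have : Fact (t ∈ Icc a b) := ⟨ht⟩
  have ha : a ∈ Icc a b := left_mem_Icc.2 (ht.1.trans ht.2)
  exact intervalIntegral.integral_hasDerivWithinAt_right
    ((hN.mono (uIcc_subset_Icc ha ht)).intervalIntegrable)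
    (hN.stronglyMeasurableAtFilter_nhdsWithin measurableSet_Icc t) (hN t ht)

theorem le_mul_exp_integral_of_hasDerivWithinAt_le {f f' N : ℝ → ℝ} {a b t : ℝ}
    (hN : ContinuousOn N (Icc a b))
    (hf : ∀ s ∈ Icc a b, HasDerivWithinAt f (f' s) (Icc a b) s)
    (hbound : ∀ s ∈ Icc a b, f' s ≤ N s * f s) (ht : t ∈ Icc a b) :
    f t ≤ f a * exp (∫ τ in a..t, N τ) := by
  set F : ℝ → ℝ := fun u => ∫ τ in a..u, N τ
  set g : ℝ → ℝ := fun u => f u * exp (-F u)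
  have hg : ∀ s ∈ Icc a b,
      HasDerivWithinAt g ((f' s - N s * f s) * exp (-F s)) (Icc a b) s := by
    intro s hs
    have hexp : HasDerivWithinAt (fun u => exp (-F u)) (exp (-F s) * -N s) (Icc a b) s :=
      (hN.hasDerivWithinAt_integral_Icc hs).neg.exp
    exact ((hf s hs).mul hexp).congr_deriv (by ring)
  have hg_anti : AntitoneOn g (Icc a b) :=
    antitoneOn_of_hasDerivWithinAt_nonpos (convex_Icc a b)
      (fun s hs => (hg s hs).continuousWithinAt)
      (fun s hs => (hg s (interior_subset hs)).mono interior_subset) fun s hs =>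
      mul_nonpos_of_nonpos_of_nonneg (sub_nonpos.2 (hbound s (interior_subset hs))) (exp_pos _).le
  have ha : a ∈ Icc a b := left_mem_Icc.2 (ht.1.trans ht.2)
  calc f t = g t * exp (F t) := by
        simp only [g, mul_assoc, ← exp_add, neg_add_cancel, exp_zero, mul_one]
    _ ≤ g a * exp (F t) := by gcongr; exact hg_anti ha ht ht.1
    _ = f a * exp (F t) := by simp [g, F]

theorem osgood_log_lower_bound_general
    (T : ℝ)
    (N : ℝ → ℝ) (hNcont : ContinuousOn N (Set.Icc 0 T))
    (R R' : ℝ → ℝ)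
    (hRpos : ∀ t ∈ Set.Icc (0 : ℝ) T, 0 < R t)
    (hRderiv : ∀ t ∈ Set.Icc (0 : ℝ) T, HasDerivWithinAt R (R' t) (Set.Icc 0 T) t)
    (hineq : ∀ t ∈ Set.Icc (0 : ℝ) T,
      R' t ≥ -N t * R t * (1 - Real.log (R t))) :
    ∀ t ∈ Set.Icc (0 : ℝ) T,
      1 - Real.log (R t) ≤ (1 - Real.log (R 0)) * Real.exp (∫ τ in (0 : ℝ)..t, N τ) ∧
      R t ≥ Real.exp (1 - (1 - Real.log (R 0)) * Real.exp (∫ τ in (0 : ℝ)..t, N τ)) := by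
  intro t ht
  have hy : ∀ s ∈ Icc 0 T,
      HasDerivWithinAt (fun u => 1 - log (R u)) (-(R' s / R s)) (Icc 0 T) s :=
    fun s hs => ((hRderiv s hs).log (hRpos s hs).ne').const_sub 1
  have hy_le : ∀ s ∈ Icc 0 T, -(R' s / R s) ≤ N s * (1 - log (R s)) := by
    intro s hs
    have : -N s * (1 - log (R s)) ≤ R' s / R s := by
      rw [le_div_iff₀ (hRpos s hs)]
      linarith [hineq s hs]
    linarith
  have hlog := le_mul_exp_integral_of_hasDerivWithinAt_le hNcont hy hy_le ht
  refine ⟨hlog, ?_⟩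
  calc exp (1 - (1 - log (R 0)) * exp (∫ τ in (0 : ℝ)..t, N τ))
      ≤ exp (log (R t)) := exp_le_exp.2 (by linarith)
    _ = R t := exp_log (hRpos t ht)

/-- Osgood-type lower bound: if `R : [0, T] → (0, 1]` satisfies the differential
inequality `R'(t) ≥ -N(t) R(t) (1 - log R(t))` with `N` continuous and nonnegative,
then `1 - log R(t) ≤ (1 - log R(0)) exp(∫₀ᵗ N)`, equivalently
`R(t) ≥ exp(1 - (1 - log R(0)) exp(∫₀ᵗ N))`. -/
theorem osgood_log_lower_bound
    (T : ℝ) (hT : 0 < T)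
    (N : ℝ → ℝ) (hNcont : ContinuousOn N (Set.Icc 0 T))
    (hNpos : ∀ t ∈ Set.Icc (0 : ℝ) T, 0 ≤ N t)
    (R R' : ℝ → ℝ)
    (hRpos : ∀ t ∈ Set.Icc (0 : ℝ) T, 0 < R t)
    (hRle : ∀ t ∈ Set.Icc (0 : ℝ) T, R t ≤ 1)
    (hRderiv : ∀ t ∈ Set.Icc (0 : ℝ) T, HasDerivWithinAt R (R' t) (Set.Icc 0 T) t)
    (hineq : ∀ t ∈ Set.Icc (0 : ℝ) T,
      R' t ≥ -N t * R t * (1 - Real.log (R t))) :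
    ∀ t ∈ Set.Icc (0 : ℝ) T,
      1 - Real.log (R t) ≤ (1 - Real.log (R 0)) * Real.exp (∫ τ in (0 : ℝ)..t, N τ) ∧
      R t ≥ Real.exp (1 - (1 - Real.log (R 0)) * Real.exp (∫ τ in (0 : ℝ)..t, N τ)) :=
  osgood_log_lower_bound_general T N hNcont R R' hRpos hRderiv hineq
end

section
/- Let S ⊆ ℝ² be a nonempty closed set, T ∈ (0, ∞], C ≥ 0, and let f : [0, T) × ℝ² → ℝ² be a continuous vector field satisfying |f(t, x)| ≤ C · dist(x, S)² for all (t, x) ∈ [0, T) × ℝ², where dist(x, S) = inf_{y ∈ S} |x - y|. If x : [0, T) → ℝ² is differentiable with x'(t) = f(t, x(t)) for all t and dist(x(0), S) > 0, then for every t ∈ [0, T), dist(x(t), S) ≥ dist(x(0), S) / (1 + C · dist(x(0), S) · t) > 0; in particular the trajectory never reaches S in finite time. -/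
open scoped ENNReal
open scoped Topology
open Set Filter Metric

/-- A trajectory of a continuous vector field on `ℝ²` whose magnitude vanishes
quadratically with the distance to a nonempty closed set `S` never reaches `S`
in finite time: `dist(x(t), S) ≥ dist(x(0), S) / (1 + C dist(x(0), S) t) > 0`. -/
theorem trajectory_never_reaches_obstacle
    (S : Set (EuclideanSpace ℝ (Fin 2))) (hS : S.Nonempty) (hSclosed : IsClosed S)
    (T : ℝ≥0∞) (hT : 0 < T) (C : ℝ) (hC : 0 ≤ C)
    (f : ℝ → EuclideanSpace ℝ (Fin 2) → EuclideanSpace ℝ (Fin 2))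
    (hfcont : ContinuousOn (fun p : ℝ × EuclideanSpace ℝ (Fin 2) => f p.1 p.2)
      {p : ℝ × EuclideanSpace ℝ (Fin 2) | 0 ≤ p.1 ∧ ENNReal.ofReal p.1 < T})
    (hfbound : ∀ (t : ℝ) (x : EuclideanSpace ℝ (Fin 2)), 0 ≤ t → ENNReal.ofReal t < T →
      ‖f t x‖ ≤ C * (Metric.infDist x S) ^ 2)
    (x : ℝ → EuclideanSpace ℝ (Fin 2))
    (hode : ∀ t : ℝ, 0 ≤ t → ENNReal.ofReal t < T →
      HasDerivWithinAt x (f t (x t)) {s : ℝ | 0 ≤ s ∧ ENNReal.ofReal s < T} t)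
    (hx0 : 0 < Metric.infDist (x 0) S) :
    ∀ t : ℝ, 0 ≤ t → ENNReal.ofReal t < T →
      Metric.infDist (x 0) S / (1 + C * Metric.infDist (x 0) S * t)
        ≤ Metric.infDist (x t) S ∧
      0 < Metric.infDist (x t) S := by
  intro t ht htT
  set d0 : ℝ := Metric.infDist (x 0) S with hd0
  set D : Set ℝ := {s : ℝ | 0 ≤ s ∧ ENNReal.ofReal s < T} with hD
  have hmemD : ∀ s ∈ Icc (0:ℝ) t, s ∈ D := by
    intro s hs
    exact ⟨hs.1, lt_of_le_of_lt (ENNReal.ofReal_le_ofReal hs.2) htT⟩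
  have hxcont : ContinuousOn x D := fun s hs => (hode s hs.1 hs.2).continuousWithinAt
  have hdcont : ContinuousOn (fun s => -Metric.infDist (x s) S) (Icc 0 t) :=
    ((continuous_infDist_pt S).comp_continuousOn (hxcont.mono hmemD)).neg
  -- the liminf-of-slope estimate for `-dist(x(·), S)`
  have hf' : ∀ s ∈ Ico (0:ℝ) t, ∀ r, C * (Metric.infDist (x s) S) ^ 2 < r →
      ∃ᶠ z in 𝓝[>] s, slope (fun w => -Metric.infDist (x w) S) s z < r := by
    intro s hs r hr
    have hsD : s ∈ D := hmemD s ⟨hs.1, hs.2.le⟩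
    have hslope : Tendsto (slope x s) (𝓝[>] s) (𝓝 (f s (x s))) := by
      have h1 : Tendsto (slope x s) (𝓝[D \ {s}] s) (𝓝 (f s (x s))) :=
        hasDerivWithinAt_iff_tendsto_slope.mp (hode s hsD.1 hsD.2)
      have hsub : Ioc s t ⊆ D \ {s} := by
        intro z hz
        exact ⟨hmemD z ⟨le_trans hs.1 hz.1.le, hz.2⟩, ne_of_gt hz.1⟩
      have : 𝓝[>] s ≤ 𝓝[D \ {s}] s := by
        rw [← nhdsWithin_Ioc_eq_nhdsGT hs.2]
        exact nhdsWithin_mono s hsub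
      exact h1.mono_left this
    have hnorm : Tendsto (fun z => ‖slope x s z‖) (𝓝[>] s) (𝓝 ‖f s (x s)‖) :=
      hslope.norm
    have hflt : ‖f s (x s)‖ < r := lt_of_le_of_lt (hfbound s (x s) hsD.1 hsD.2) hr
    have hev : ∀ᶠ z in 𝓝[>] s, ‖slope x s z‖ < r :=
      hnorm.eventually (Filter.Tendsto.eventually_lt_const hflt tendsto_id)
    refine ((hev.and self_mem_nhdsWithin).mono ?_).frequently
    rintro z ⟨hz, hzs⟩
    have hzs' : (0:ℝ) < z - s := sub_pos.mpr hzs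
    have hlip : Metric.infDist (x s) S - Metric.infDist (x z) S ≤ dist (x z) (x s) := by
      have := Metric.infDist_le_infDist_add_dist (x := x s) (y := x z) (s := S)
      rw [dist_comm]
      linarith [this]
    have hnormeq : ‖slope x s z‖ = dist (x z) (x s) / (z - s) := by
      rw [slope_def_module, norm_smul, norm_inv, Real.norm_eq_abs,
        abs_of_pos hzs', dist_eq_norm]
      ring
    have hsl : slope (fun w => -Metric.infDist (x w) S) s z
        = (Metric.infDist (x s) S - Metric.infDist (x z) S) / (z - s) := by
      rw [slope_def_field]; ring
    rw [hsl]
    calc (Metric.infDist (x s) S - Metric.infDist (x z) S) / (z - s)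
        ≤ dist (x z) (x s) / (z - s) := by gcongr
      _ = ‖slope x s z‖ := hnormeq.symm
      _ < r := hz
  have key : ∀ ε : ℝ, 0 < ε → d0 / (1 + (C + ε) * d0 * t) ≤ Metric.infDist (x t) S := by
    intro ε hε
    set k : ℝ := (C + ε) * d0 with hk
    have hkpos : 0 < k := mul_pos (by linarith) hx0
    have hden : ∀ s : ℝ, 0 ≤ s → 0 < 1 + k * s := by
      intro s hs; positivity
    have hB' : ∀ s ∈ Ico (0:ℝ) t,
        HasDerivWithinAt (fun w => -(d0 / (1 + k * w)))
          ((C + ε) * (d0 / (1 + k * s)) ^ 2) (Ici s) s := by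
      intro s hs
      have hne : (1 + k * s) ≠ 0 := ne_of_gt (hden s hs.1)
      have h1 : HasDerivAt (fun w : ℝ => 1 + k * w) k s := by
        simpa using ((hasDerivAt_id s).const_mul k).const_add 1
      have h2 : HasDerivAt (fun w => -(d0 / (1 + k * w)))
          (-((0 * (1 + k * s) - d0 * k) / (1 + k * s) ^ 2)) s :=
        ((hasDerivAt_const s d0).div h1 hne).neg
      have heq : -((0 * (1 + k * s) - d0 * k) / (1 + k * s) ^ 2)
          = (C + ε) * (d0 / (1 + k * s)) ^ 2 := by
        rw [hk]; field_simp; ring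
      exact (heq ▸ h2).hasDerivWithinAt
    have hBcont : ContinuousOn (fun w => -(d0 / (1 + k * w))) (Icc 0 t) := by
      apply ContinuousOn.neg
      apply ContinuousOn.div continuousOn_const
      · fun_prop
      · intro s hs; exact ne_of_gt (hden s hs.1)
    have ha : -Metric.infDist (x 0) S ≤ -(d0 / (1 + k * 0)) := by
      simp [hd0]
    have bound : ∀ s ∈ Ico (0:ℝ) t,
        -Metric.infDist (x s) S = -(d0 / (1 + k * s)) →
        C * (Metric.infDist (x s) S) ^ 2 < (C + ε) * (d0 / (1 + k * s)) ^ 2 := by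
      intro s hs heq
      have hds : Metric.infDist (x s) S = d0 / (1 + k * s) := by linarith
      have hpos : 0 < d0 / (1 + k * s) := div_pos hx0 (hden s hs.1)
      rw [hds]
      have hq : 0 < ε * (d0 / (1 + k * s)) ^ 2 := by positivity
      nlinarith [hq]
    have := image_le_of_liminf_slope_right_lt_deriv_boundary' hdcont hf' ha hBcont hB' bound
      (Set.right_mem_Icc.mpr ht)
    have : d0 / (1 + k * t) ≤ Metric.infDist (x t) S := by linarith
    simpa [hk, mul_assoc] using this
  have hdenpos : 0 < 1 + C * d0 * t := by positivity
  constructor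
  · have hlim : Tendsto (fun ε : ℝ => d0 / (1 + (C + ε) * d0 * t)) (𝓝[>] 0)
        (𝓝 (d0 / (1 + C * d0 * t))) := by
      have hcont : Tendsto (fun ε : ℝ => d0 / (1 + (C + ε) * d0 * t)) (𝓝 0)
          (𝓝 (d0 / (1 + (C + 0) * d0 * t))) := by
        have hc : Continuous (fun ε : ℝ => 1 + (C + ε) * d0 * t) := by continuity
        apply Tendsto.div tendsto_const_nhds (hc.tendsto 0)
        simpa using ne_of_gt hdenpos
      simpa using hcont.mono_left nhdsWithin_le_nhds
    exact le_of_tendsto hlim (eventually_nhdsWithin_of_forall fun ε hε => key ε hε)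
  · have h1 := key 1 one_pos
    have : 0 < d0 / (1 + (C + 1) * d0 * t) := by positivity
    linarith
end
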